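/- arXiv:1804.05746 — 2 statements merged into one kernel-verified Lean document; each statement's English description precedes it below -/
import Mathlib

section
/- There is no nonzero tuple of polynomials R_0(A), …, R_n(A) ∈ ℚ[A] with R_n ≠ 0, R_0 ≠ 0 and n > 0 such that R_n(ζ)·p^{−n} + R_{n−1}(ζ)·p^{1−n} + ⋯ + R_1(ζ)·p^{−1} + R_0(ζ) = 0 holds for all but finitely many pairs (p, ζ) where p > 1 is odd and ζ = e^{sπi/p} with gcd(s,2p) = 1. -/
/-!
Take `s = 1` and `p` prime. Then `ζ = exp (π i / p)` is a primitive `2p`-th root of unity, whose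
minimal polynomial over `ℚ` is the cyclotomic polynomial of degree `φ(2p) = p - 1`. Once `p - 1`
exceeds the degrees of all `R_j`, the relation therefore holds in `ℚ[A]`: `∑ R_j p^{-j} = 0`.
Read coefficientwise in `A`, this says that finitely many polynomials in `1/p` vanish at
infinitely many points, so they are zero, and so is every `R_j`.
-/

open Complex Polynomial Finset

namespace Polynomial

theorem eq_zero_of_sum_mul_C_pow_eq_zero {K : Type*} [CommRing K] [IsDomain K] {R : ℕ → K[X]}
    {n : ℕ} {T : Set K} (hT : T.Infinite) (h : ∀ t ∈ T, ∑ j ∈ range (n + 1), R j * C (t ^ j) = 0)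
    {j : ℕ} (hj : j ≤ n) : R j = 0 := by
  ext a
  have hP : (∑ i ∈ range (n + 1), C ((R i).coeff a) * X ^ i) = 0 :=
    eq_zero_of_infinite_isRoot _ <| hT.mono fun t ht => by
      have := congrArg (coeff · a) (h t ht)
      simp only [finsetSum_coeff, coeff_mul_C, coeff_zero] at this
      simp only [Set.mem_ofPred_eq, IsRoot, eval_finsetSum, eval_mul, eval_C, eval_pow, eval_X]
      simpa only [mul_comm] using this
  simpa [finsetSum_coeff, coeff_X_pow, Nat.lt_succ_iff.mpr hj] using congrArg (coeff · j) hP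

end Polynomial

theorem IsPrimitiveRoot.eq_zero_of_aeval_eq_zero_of_natDegree_lt {K : Type*} [Field K]
    [CharZero K] {ζ : K} {k : ℕ} (hζ : IsPrimitiveRoot ζ k) (hk : 0 < k) {Q : ℚ[X]}
    (hQ : aeval ζ Q = 0) (hdeg : Q.natDegree < k.totient) : Q = 0 := by
  by_contra hQ0
  have := natDegree_le_of_dvd (minpoly.dvd ℚ ζ hQ) hQ0
  rw [← cyclotomic_eq_minpoly_rat hζ hk, natDegree_cyclotomic] at this
  omega

theorem Complex.isPrimitiveRoot_exp_pi_mul_I_div (p : ℕ) (hp : p ≠ 0) :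
    IsPrimitiveRoot (exp (Real.pi * I / p)) (2 * p) := by
  convert isPrimitiveRoot_exp (2 * p) (by positivity) using 2
  push_cast
  field_simp

theorem sum_mul_C_inv_pow_eq_zero_of_aeval_exp {R : ℕ → ℚ[X]} {n p D : ℕ} (hp : p.Prime)
    (hD : D + 2 < p) (hdeg : ∀ j ∈ range (n + 1), (R j).natDegree ≤ D)
    (h : ∑ j ∈ range (n + 1), aeval (exp (Real.pi * I / p)) (R j) * (p : ℂ) ^ (-(j : ℤ)) = 0) :
    ∑ j ∈ range (n + 1), R j * C ((p : ℚ)⁻¹ ^ j) = 0 := by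
  refine (isPrimitiveRoot_exp_pi_mul_I_div p hp.ne_zero).eq_zero_of_aeval_eq_zero_of_natDegree_lt
    (by have := hp.pos; positivity) ?_ ?_
  · simpa [map_sum] using h
  · rw [Nat.totient_two_mul_of_odd (hp.odd_of_ne_two (by omega)), Nat.totient_prime hp]
    refine (natDegree_sum_le_of_forall_le (n := D) _ _ fun j hj => ?_).trans_lt (by omega)
    exact (natDegree_mul_C_le _ _).trans (hdeg j hj)

/-- There is no relation `∑_{j=0}^n R_j(ζ) p^{−j} = 0` with `R_j ∈ ℚ[A]`, `n > 0`,
`R_n ≠ 0`, `R_0 ≠ 0` holding for all but finitely many pairs `(p, ζ)` with `p > 1`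
odd and `ζ = e^{sπi/p}`, `gcd(s, 2p) = 1`. -/
theorem no_polynomial_relation :
    ¬ ∃ (n : ℕ) (R : ℕ → Polynomial ℚ), 0 < n ∧ R n ≠ 0 ∧ R 0 ≠ 0 ∧
      ∃ S : Set (ℕ × ℂ), S.Finite ∧
        ∀ p s : ℕ, Odd p → 1 < p → Nat.Coprime s (2*p) →
          (p, Complex.exp (Real.pi * I * s / p)) ∉ S →
            ∑ j ∈ Finset.range (n + 1),
                Polynomial.aeval (Complex.exp (Real.pi * I * s / p)) (R j) * (p : ℂ)^(-(j : ℤ))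
              = 0 := by
  rintro ⟨n, R, -, hRn, -, S, hS, hrel⟩
  set D := (range (n + 1)).sup fun j => (R j).natDegree
  set G := {p : ℕ | p.Prime} \ (Set.Iic (D + 2) ∪ Prod.fst '' S)
  have hG : G.Infinite :=
    Nat.infinite_setOfPred_prime.sdiff ((Set.finite_Iic _).union (hS.image _))
  refine hRn <| eq_zero_of_sum_mul_C_pow_eq_zero
    (hG.image (inv_injective.comp Nat.cast_injective).injOn) ?_ le_rfl
  rintro _ ⟨p, ⟨hp, hpG⟩, rfl⟩
  simp only [Set.mem_union, Set.mem_Iic, Set.mem_image, not_or, not_le, not_exists, not_and] at hpG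
  refine sum_mul_C_inv_pow_eq_zero_of_aeval_exp hp hpG.1
    (fun j hj => le_sup (f := fun j => (R j).natDegree) hj) ?_
  simpa using hrel p 1 (hp.odd_of_ne_two (by omega)) hp.one_lt (Nat.coprime_one_left _)
    (fun hS' => hpG.2 _ hS' rfl)
end

section
/- Let g ≥ 1 and let D_g^{(2c)} be the polynomial in p and c given by the residue formula (as in the previous context). Then D_g^{(2c)} can be written as p^{g−1}·X(p,c) + p^g·Y(c), where X(p,c) is a polynomial that is even as a polynomial in p and Y(c) is a polynomial in c alone. -/
open PowerSeries

/-- The even power series `s(at) = sinh(at)/(at) = ∑_k (at)^{2k}/(2k+1)!`. -/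
noncomputable def sSeries (a : ℚ) : PowerSeries ℚ :=
  PowerSeries.mk fun k => if Even k then a ^ k / (k + 1).factorial else 0

/-- The power series `2pt/(e^{2pt}−1) = ∑_k B_k (2p)^k t^k / k!`. -/
noncomputable def bSeries (p : ℚ) : PowerSeries ℚ :=
  PowerSeries.mk fun k => bernoulli k * (2 * p) ^ k / k.factorial

/-- The residue at `t = 0` of `(2pt/(e^{2pt}−1)) · (s((2c+1)t)/s(t)^{2g−1}) · dt/t^{2g−1}`. -/
noncomputable def resTerm (g : ℕ) (p c : ℚ) : ℚ :=
  PowerSeries.coeff (R := ℚ) (2 * g - 2) (bSeries p * sSeries (2 * c + 1) * (sSeries 1 ^ (2 * g - 1))⁻¹)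

/-- The Verlinde number `D_g^{(2c)}` given by the residue formula. -/
noncomputable def Dval (g : ℕ) (p c : ℚ) : ℚ :=
  ((-p) ^ g / 2) * ((4 : ℚ) ^ (1 - (g : ℤ)) * ((2 * c + 1) / p) * resTerm g p c
    - (descPochhammer ℚ (2 * g - 2)).eval (c + g - 1) / (2 * g - 2).factorial)


/-!
Expanding the residue as a Cauchy product, `resTerm g p c = ∑_{k ≤ 2g−2} p^k · r_k(c)` with
`r_k(c) = B_k 2^k / k! · [t^{2g−2−k}] s((2c+1)t)/s(t)^{2g−1}`, a polynomial in `c`. Since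
`B_k = 0` for odd `k > 1`, the odd part of this sum is `p · r_1(c)`. Multiplying by
`(−p)^g/2 · 4^{1−g}(2c+1)/p`, the even part contributes `p^{g−1}` times an even polynomial in `p`
and the odd part, together with the binomial term, contributes `p^g` times a polynomial in `c`.
-/

open Finset
open scoped Polynomial

lemma sSeries_eq_rescale (a : ℚ) : sSeries a = rescale a (sSeries 1) := by
  ext k
  by_cases hk : Even k <;> simp [sSeries, coeff_rescale, hk, div_eq_mul_inv]

lemma coeff_bSeries (p : ℚ) (k : ℕ) :
    coeff k (bSeries p) = p ^ k * (bernoulli k * 2 ^ k / k.factorial) := by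
  rw [bSeries, coeff_mk, mul_pow]
  ring

lemma bernoulli_mul_pow_of_odd {k : ℕ} (hk : Odd k) (p : ℚ) :
    bernoulli k * p ^ k = bernoulli k * p := by
  obtain rfl | hlt := (show 1 ≤ k from hk.pos).eq_or_lt
  · rw [pow_one]
  · rw [bernoulli_eq_zero_of_odd hk hlt, zero_mul, zero_mul]

/-- The coefficient of `t^m` in `s((2c+1)t)/s(t)^{2g−1}`, as a polynomial in `c`. -/
noncomputable def sQuotCoeff (g m : ℕ) : ℚ[X] :=
  ∑ x ∈ antidiagonal m,
    Polynomial.C (coeff x.1 (sSeries 1) * coeff x.2 (sSeries 1 ^ (2 * g - 1))⁻¹) *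
      (2 * Polynomial.X + 1) ^ x.1

lemma eval_sQuotCoeff (g m : ℕ) (c : ℚ) :
    (sQuotCoeff g m).eval c = coeff m (sSeries (2 * c + 1) * (sSeries 1 ^ (2 * g - 1))⁻¹) := by
  rw [sSeries_eq_rescale (2 * c + 1), coeff_mul, sQuotCoeff, Polynomial.eval_finsetSum]
  refine sum_congr rfl fun x _ => ?_
  simp only [Polynomial.eval_mul, Polynomial.eval_C, Polynomial.eval_pow, Polynomial.eval_add,
    Polynomial.eval_X, Polynomial.eval_ofNat, Polynomial.eval_one, coeff_rescale]
  ring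

noncomputable def resTermCoeff (g : ℕ) (x : ℕ × ℕ) : ℚ[X] :=
  Polynomial.C (bernoulli x.1 * 2 ^ x.1 / x.1.factorial) * sQuotCoeff g x.2

lemma resTerm_eq_sum (g : ℕ) (p c : ℚ) :
    resTerm g p c = ∑ x ∈ antidiagonal (2 * g - 2), p ^ x.1 * (resTermCoeff g x).eval c := by
  rw [resTerm, mul_assoc, coeff_mul]
  refine sum_congr rfl fun x _ => ?_
  rw [coeff_bSeries, resTermCoeff, Polynomial.eval_mul, Polynomial.eval_C, eval_sQuotCoeff]
  ring

lemma pow_mul_eval_resTermCoeff_of_odd (g : ℕ) {x : ℕ × ℕ} (hx : Odd x.1) (p c : ℚ) :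
    p ^ x.1 * (resTermCoeff g x).eval c = p * (resTermCoeff g x).eval c := by
  simp only [resTermCoeff, Polynomial.eval_mul, Polynomial.eval_C]
  linear_combination (2 ^ x.1 / x.1.factorial * (sQuotCoeff g x.2).eval c) *
    bernoulli_mul_pow_of_odd hx p

noncomputable def resTermEven (g : ℕ) : MvPolynomial (Fin 2) ℚ :=
  ∑ x ∈ (antidiagonal (2 * g - 2)).filter (Even ·.1),
    MvPolynomial.X 0 ^ x.1 * Polynomial.aeval (MvPolynomial.X 1) (resTermCoeff g x)

noncomputable def resTermOdd (g : ℕ) : ℚ[X] :=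
  ∑ x ∈ (antidiagonal (2 * g - 2)).filter (¬ Even ·.1), resTermCoeff g x

lemma eval_aeval_X {σ R : Type*} [CommSemiring R] (v : σ → R) (i : σ) (q : R[X]) :
    MvPolynomial.eval v (Polynomial.aeval (MvPolynomial.X i) q) = q.eval (v i) := by
  have h := Polynomial.aeval_algHom_apply (MvPolynomial.aeval v) (MvPolynomial.X i) q
  rw [MvPolynomial.aeval_X, Polynomial.coe_aeval_eq_eval] at h
  exact h.symm

lemma eval_resTermEven (g : ℕ) (p c : ℚ) :
    MvPolynomial.eval ![p, c] (resTermEven g) =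
      ∑ x ∈ (antidiagonal (2 * g - 2)).filter (Even ·.1), p ^ x.1 * (resTermCoeff g x).eval c := by
  simp [resTermEven, eval_aeval_X]

lemma eval_resTermEven_neg (g : ℕ) (p c : ℚ) :
    MvPolynomial.eval ![-p, c] (resTermEven g) = MvPolynomial.eval ![p, c] (resTermEven g) := by
  simp only [eval_resTermEven]
  exact sum_congr rfl fun x hx => by rw [(mem_filter.1 hx).2.neg_pow]

lemma resTerm_eq_even_add_odd (g : ℕ) (p c : ℚ) :
    resTerm g p c = MvPolynomial.eval ![p, c] (resTermEven g) + p * (resTermOdd g).eval c := by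
  rw [resTerm_eq_sum, eval_resTermEven, resTermOdd, Polynomial.eval_finsetSum, mul_sum,
    ← sum_filter_add_sum_filter_not _ (Even ·.1)]
  congr 1
  exact sum_congr rfl fun x hx =>
    pow_mul_eval_resTermCoeff_of_odd g (Nat.not_even_iff_odd.1 (mem_filter.1 hx).2) p c

noncomputable def Xpoly (g : ℕ) : MvPolynomial (Fin 2) ℚ :=
  MvPolynomial.C ((-1) ^ g / 2 * (4 : ℚ) ^ (1 - (g : ℤ))) * (2 * MvPolynomial.X 1 + 1) *
    resTermEven g

noncomputable def Ypoly (g : ℕ) : ℚ[X] :=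
  Polynomial.C ((-1) ^ g / 2) *
    (Polynomial.C ((4 : ℚ) ^ (1 - (g : ℤ))) * (2 * Polynomial.X + 1) * resTermOdd g
      - Polynomial.C (1 / ((2 * g - 2).factorial : ℚ)) *
        (descPochhammer ℚ (2 * g - 2)).comp (Polynomial.X + Polynomial.C (g : ℚ) - 1))

lemma eval_Xpoly_neg (g : ℕ) (p c : ℚ) :
    MvPolynomial.eval ![-p, c] (Xpoly g) = MvPolynomial.eval ![p, c] (Xpoly g) := by
  simp only [Xpoly, map_mul, eval_resTermEven_neg]
  simp

lemma Dval_eq (g : ℕ) (hg : 1 ≤ g) {p : ℚ} (hp : p ≠ 0) (c : ℚ) :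
    Dval g p c = p ^ (g - 1) * MvPolynomial.eval ![p, c] (Xpoly g) + p ^ g * (Ypoly g).eval c := by
  obtain ⟨n, rfl⟩ := Nat.exists_eq_add_of_le' hg
  rw [Dval, resTerm_eq_even_add_odd]
  simp only [Xpoly, Ypoly, map_mul, map_add, map_one, MvPolynomial.eval_C, MvPolynomial.eval_X,
    MvPolynomial.eval_ofNat, Matrix.cons_val_one, Matrix.cons_val_fin_one,
    Polynomial.eval_mul, Polynomial.eval_sub, Polynomial.eval_add, Polynomial.eval_C,
    Polynomial.eval_X, Polynomial.eval_one, Polynomial.eval_ofNat, Polynomial.eval_comp,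
    add_tsub_cancel_right]
  field_simp
  ring

/-- `D_g^{(2c)} = p^{g−1}·X(p,c) + p^g·Y(c)` with `X` even in `p` and `Y` a polynomial
in `c` alone. -/
theorem verlinde_even_odd_decomposition (g : ℕ) (hg : 1 ≤ g) :
    ∃ (D Xp : MvPolynomial (Fin 2) ℚ) (Y : Polynomial ℚ),
      (∀ p c : ℚ, p ≠ 0 → MvPolynomial.eval ![p, c] D = Dval g p c) ∧
      (∀ a b : ℚ, MvPolynomial.eval ![-a, b] Xp = MvPolynomial.eval ![a, b] Xp) ∧
      D = MvPolynomial.X 0 ^ (g - 1) * Xp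
            + MvPolynomial.X 0 ^ g * Polynomial.aeval (MvPolynomial.X 1) Y := by
  refine ⟨_, Xpoly g, Ypoly g, fun p c hp => ?_, eval_Xpoly_neg g, rfl⟩
  simp [eval_aeval_X, Dval_eq g hg hp]
end
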